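/- arXiv:2106.14485 — 2 statements merged into one kernel-verified Lean document; each statement's English description precedes it below -/
import Mathlib

section
/- Let K ∈ ℝ≥0^{n^T} be the tensor with entries K_{i_1…i_T} = (∏_{t=1}^T k_{i_t})(∏_{t=1}^{T-1} K_{i_t i_{t+1}}) for a nonnegative vector k ∈ ℝ≥0^n and nonnegative matrix K ∈ ℝ≥0^{n×n}, and let U = u₁ ⊗ ⋯ ⊗ u_T with u_t ∈ ℝ≥0^n. Then for each t ∈ {1,…,T}, the projection of the elementwise product satisfies P_t(K ⊙ U) = u_t ⊙ k ⊙ φ̂_t ⊙ φ_t, where φ̂₁ = 𝟏, φ_T = 𝟏, φ̂_t = Kᵀ(u_{t-1} ⊙ k ⊙ φ̂_{t-1}) for t = 2,…,T, and φ_t = K(u_{t+1} ⊙ k ⊙ φ_{t+1}) for t = T-1,…,1. -/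
/-- Forward messages: `φ̂₀ = 𝟏` and `φ̂_{s+1} = Kᵀ (u_s ⊙ k ⊙ φ̂_s)`. -/
def phihat (n : ℕ) (Km : Matrix (Fin n) (Fin n) ℝ) (k : Fin n → ℝ)
    (u : ℕ → Fin n → ℝ) : ℕ → Fin n → ℝ
  | 0 => fun _ => 1
  | s + 1 => fun i => ∑ j, Km j i * (u s j * k j * phihat n Km k u s j)

/-- Backward messages counted from the end (`phiaux m = φ_{T-m}`):
`φ_T = 𝟏` and `φ_t = K (u_{t+1} ⊙ k ⊙ φ_{t+1})`. -/
def phiaux (n : ℕ) (Km : Matrix (Fin n) (Fin n) ℝ) (k : Fin n → ℝ)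
    (u : ℕ → Fin n → ℝ) (T : ℕ) : ℕ → Fin n → ℝ
  | 0 => fun _ => 1
  | m + 1 => fun i => ∑ j, Km i j * (u (T - m) j * k j * phiaux n Km k u T m j)

def phivgen (n : ℕ) (Km : Matrix (Fin n) (Fin n) ℝ) (k : Fin n → ℝ)
    (u : ℕ → Fin n → ℝ) (v : Fin n → ℝ) : ℕ → Fin n → ℝ
  | 0 => v
  | s + 1 => fun i => ∑ j, Km j i * (u s j * k j * phivgen n Km k u v s j)

variable {n : ℕ} (Km : Matrix (Fin n) (Fin n) ℝ) (k : Fin n → ℝ)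

lemma phivgen_one (u : ℕ → Fin n → ℝ) : ∀ s i,
    phivgen n Km k u (fun _ => 1) s i = phihat n Km k u s i := by
  intro s
  induction s with
  | zero => intro i; rfl
  | succ s ih => intro i; simp only [phivgen, phihat, ih]

lemma phiaux_shift (u : ℕ → Fin n → ℝ) (T : ℕ) : ∀ m, m ≤ T → ∀ i,
    phiaux n Km k (fun r => u (r + 1)) T m i = phiaux n Km k u (T + 1) m i := by
  intro m
  induction m with
  | zero => intro _ i; rfl
  | succ m ih =>
      intro hm i
      have h1 : T - m + 1 = T + 1 - m := by omega
      simp only [phiaux, ih (by omega), h1]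

lemma phivgen_peel (u : ℕ → Fin n → ℝ) (v : Fin n → ℝ) : ∀ s i,
    phivgen n Km k (fun r => u (r + 1))
      (fun i0 => ∑ j, Km j i0 * (u 0 j * k j * v j)) s i
    = phivgen n Km k u v (s + 1) i := by
  intro s
  induction s with
  | zero => intro i; rfl
  | succ s ih => intro i; simp only [phivgen, ih]

lemma sum_cons_eq (N : ℕ) (f : (Fin (N + 1) → Fin n) → ℝ) :
    ∑ x : Fin (N + 1) → Fin n, f x
      = ∑ j : Fin n, ∑ y : Fin N → Fin n, f (Fin.cons j y) := by
  rw [← Equiv.sum_comp (Fin.consEquiv (fun _ => Fin n)) f, Fintype.sum_prod_type]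
  rfl

lemma W_cons (N : ℕ) (u : ℕ → Fin n → ℝ) (j : Fin n) (y : Fin (N + 1) → Fin n) :
    ((∏ s, k ((Fin.cons j y : Fin (N+2) → Fin n) s)) *
        ∏ s : Fin (N + 1), Km ((Fin.cons j y : Fin (N+2) → Fin n) s.castSucc) ((Fin.cons j y : Fin (N+2) → Fin n) s.succ)) *
      ∏ s : Fin (N + 2), u s.val ((Fin.cons j y : Fin (N+2) → Fin n) s)
    = (k j * u 0 j * Km j (y 0)) *
      (((∏ s, k (y s)) * ∏ s : Fin N, Km (y s.castSucc) (y s.succ)) *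
        ∏ s : Fin (N + 1), u (s.val + 1) (y s)) := by
  rw [Fin.prod_univ_succ (fun s => k ((Fin.cons j y : Fin (N+2) → Fin n) s)),
      Fin.prod_univ_succ (fun s : Fin (N+1) => Km ((Fin.cons j y : Fin (N+2) → Fin n) s.castSucc) ((Fin.cons j y : Fin (N+2) → Fin n) s.succ)),
      Fin.prod_univ_succ (fun s : Fin (N+2) => u s.val ((Fin.cons j y : Fin (N+2) → Fin n) s))]
  simp only [Fin.cons_zero, Fin.cons_succ, Fin.castSucc_zero, Fin.val_zero,
    Fin.val_succ, ← Fin.succ_castSucc]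
  ring

lemma lemB : ∀ (T : ℕ) (u : ℕ → Fin n → ℝ) (g : Fin n → ℝ),
    (∑ x : Fin (T + 1) → Fin n,
        g (x 0) *
          (((∏ s, k (x s)) * ∏ s : Fin T, Km (x s.castSucc) (x s.succ)) *
            ∏ s : Fin (T+1), u s.val (x s)))
      = ∑ j, g j * (u 0 j * k j * phiaux n Km k u T T j) := by
  intro T
  induction T with
  | zero =>
      intro u g
      rw [← Equiv.sum_comp (Equiv.funUnique (Fin 1) (Fin n)).symm]
      refine Finset.sum_congr rfl fun j _ => ?_
      simp only [phiaux, Equiv.funUnique, Equiv.piUnique, Equiv.coe_fn_symm_mk,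
        uniqueElim_const, Fin.prod_univ_one, Fin.prod_univ_zero, mul_one, Fin.val_zero,
        Equiv.symm_trans_apply, Equiv.symm_symm, Equiv.coe_refl, id_eq, Equiv.coe_fn_mk]
      rw [Fin.prod_univ_one, Fin.prod_univ_one]
      simp only [Fin.val_zero]
      ring
  | succ T ih =>
      intro u g
      rw [sum_cons_eq]
      have key : ∀ j : Fin n, ∑ y : Fin (T+1) → Fin n,
          g ((Fin.cons j y : Fin (T+2) → Fin n) 0) *
            (((∏ s, k ((Fin.cons j y : Fin (T+2) → Fin n) s)) *
                ∏ s : Fin (T+1), Km ((Fin.cons j y : Fin (T+2) → Fin n) s.castSucc) ((Fin.cons j y : Fin (T+2) → Fin n) s.succ)) *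
              ∏ s : Fin (T+2), u s.val ((Fin.cons j y : Fin (T+2) → Fin n) s))
          = ∑ y : Fin (T+1) → Fin n,
              (g j * k j * u 0 j * Km j (y 0)) *
                (((∏ s, k (y s)) * ∏ s : Fin T, Km (y s.castSucc) (y s.succ)) *
                  ∏ s : Fin (T+1), u (s.val + 1) (y s)) := by
        intro j
        refine Finset.sum_congr rfl fun y _ => ?_
        rw [Fin.cons_zero, W_cons]
        ring
      simp only [key]
      have inner : ∀ j : Fin n, ∑ y : Fin (T+1) → Fin n,
          (g j * k j * u 0 j * Km j (y 0)) *
            (((∏ s, k (y s)) * ∏ s : Fin T, Km (y s.castSucc) (y s.succ)) *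
              ∏ s : Fin (T+1), u (s.val + 1) (y s))
          = ∑ j0, (g j * k j * u 0 j * Km j j0) *
              (u 1 j0 * k j0 * phiaux n Km k (fun r => u (r+1)) T T j0) := by
        intro j
        exact ih (fun r => u (r + 1)) (fun i0 => g j * k j * u 0 j * Km j i0)
      simp only [inner]
      have hsh : ∀ j0, phiaux n Km k (fun r => u (r+1)) T T j0
          = phiaux n Km k u (T+1) T j0 := fun j0 => phiaux_shift Km k u T T le_rfl j0
      simp only [hsh]
      refine Finset.sum_congr rfl fun j _ => ?_
      have : phiaux n Km k u (T+1) (T+1) j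
          = ∑ j0, Km j j0 * (u 1 j0 * k j0 * phiaux n Km k u (T+1) T j0) := by
        simp only [phiaux]
        norm_num
      rw [this]
      simp only [Finset.mul_sum]
      exact Finset.sum_congr rfl fun j0 _ => by ring

lemma lemG : ∀ (tv T : ℕ) (htv : tv ≤ T) (u : ℕ → Fin n → ℝ) (v g : Fin n → ℝ),
    (∑ x : Fin (T + 1) → Fin n,
        v (x 0) * g (x ⟨tv, by omega⟩) *
          (((∏ s, k (x s)) * ∏ s : Fin T, Km (x s.castSucc) (x s.succ)) *
            ∏ s : Fin (T + 1), u s.val (x s)))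
      = ∑ j, g j * (u tv j * k j * phivgen n Km k u v tv j *
          phiaux n Km k u T (T - tv) j) := by
  intro tv
  induction tv with
  | zero =>
      intro T htv u v g
      have hB := lemB Km k T u (fun j => v j * g j)
      calc (∑ x : Fin (T + 1) → Fin n,
              v (x 0) * g (x ⟨0, by omega⟩) *
                (((∏ s, k (x s)) * ∏ s : Fin T, Km (x s.castSucc) (x s.succ)) *
                  ∏ s : Fin (T + 1), u s.val (x s)))
          = ∑ x : Fin (T + 1) → Fin n,
              (fun j => v j * g j) (x 0) *
                (((∏ s, k (x s)) * ∏ s : Fin T, Km (x s.castSucc) (x s.succ)) *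
                  ∏ s : Fin (T + 1), u s.val (x s)) := by
            refine Finset.sum_congr rfl fun x _ => ?_
            have h0 : (⟨0, by omega⟩ : Fin (T + 1)) = 0 := rfl
            rw [h0]
        _ = ∑ j, (fun j => v j * g j) j * (u 0 j * k j * phiaux n Km k u T T j) := hB
        _ = ∑ j, g j * (u 0 j * k j * phivgen n Km k u v 0 j *
              phiaux n Km k u T (T - 0) j) := by
            refine Finset.sum_congr rfl fun j _ => ?_
            simp only [phivgen, Nat.sub_zero]
            ring
  | succ s ih =>
      intro T htv u v g
      obtain ⟨T', rfl⟩ : ∃ T', T = T' + 1 := ⟨T - 1, by omega⟩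
      have hs : s ≤ T' := by omega
      rw [sum_cons_eq]
      have key : (∑ j : Fin n, ∑ y : Fin (T' + 1) → Fin n,
            v ((Fin.cons j y : Fin (T'+2) → Fin n) 0) *
              g ((Fin.cons j y : Fin (T'+2) → Fin n) ⟨s + 1, by omega⟩) *
              (((∏ r, k ((Fin.cons j y : Fin (T'+2) → Fin n) r)) *
                  ∏ r : Fin (T'+1), Km ((Fin.cons j y : Fin (T'+2) → Fin n) r.castSucc)
                    ((Fin.cons j y : Fin (T'+2) → Fin n) r.succ)) *
                ∏ r : Fin (T'+2), u r.val ((Fin.cons j y : Fin (T'+2) → Fin n) r)))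
          = ∑ y : Fin (T' + 1) → Fin n,
              (fun i0 => ∑ j, Km j i0 * (u 0 j * k j * v j)) (y 0) *
                g (y ⟨s, by omega⟩) *
                (((∏ r, k (y r)) * ∏ r : Fin T', Km (y r.castSucc) (y r.succ)) *
                  ∏ r : Fin (T'+1), (fun m => u (m + 1)) r.val (y r)) := by
        rw [Finset.sum_comm]
        refine Finset.sum_congr rfl fun y _ => ?_
        simp only
        rw [Finset.sum_mul, Finset.sum_mul]
        refine Finset.sum_congr rfl fun j _ => ?_
        have hsucc : (⟨s + 1, by omega⟩ : Fin (T' + 2)) = Fin.succ ⟨s, by omega⟩ := rfl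
        rw [Fin.cons_zero, hsucc, Fin.cons_succ, W_cons]
        ring
      rw [key, ih T' hs (fun m => u (m + 1))
        (fun i0 => ∑ j, Km j i0 * (u 0 j * k j * v j)) g]
      refine Finset.sum_congr rfl fun j _ => ?_
      rw [phivgen_peel, phiaux_shift Km k u T' (T' - s) (by omega)]
      have : T' - s = T' + 1 - (s + 1) := by omega
      rw [this]

/-- Efficient projection formula for the path-graph structured tensor:
`P_t(K ⊙ U) = u_t ⊙ k ⊙ φ̂_t ⊙ φ_t`, where the tensor has `T+1` marginals
(indexed `0,…,T`), `K_{i_0…i_T} = (∏_t k_{i_t})(∏_t K_{i_t i_{t+1}})` and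
`U = u_0 ⊗ ⋯ ⊗ u_T`. -/
theorem stmt_4 (T n : ℕ) (Km : Matrix (Fin n) (Fin n) ℝ) (k : Fin n → ℝ)
    (u : ℕ → Fin n → ℝ) (hK : ∀ i j, 0 ≤ Km i j) (hk : ∀ i, 0 ≤ k i)
    (hu : ∀ s i, 0 ≤ u s i) (t : Fin (T + 1)) (i : Fin n) :
    (∑ x : Fin (T + 1) → Fin n,
        if x t = i then
          (((∏ s, k (x s)) * ∏ s : Fin T, Km (x s.castSucc) (x s.succ)) *
            ∏ s, u s.val (x s))
        else 0)
      = u t.val i * k i * phihat n Km k u t.val i *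
          phiaux n Km k u T (T - t.val) i := by

  have ht : t.val ≤ T := Nat.lt_succ_iff.mp t.isLt
  have h := lemG Km k t.val T ht u (fun _ => 1) (fun j => if j = i then 1 else 0)
  have ht2 : (⟨t.val, by omega⟩ : Fin (T + 1)) = t := Fin.eta t _
  rw [ht2] at h
  calc (∑ x : Fin (T + 1) → Fin n,
          if x t = i then
            (((∏ s, k (x s)) * ∏ s : Fin T, Km (x s.castSucc) (x s.succ)) *
              ∏ s, u s.val (x s))
          else 0)
      = ∑ x : Fin (T + 1) → Fin n,
          (fun _ : Fin n => (1:ℝ)) (x 0) * (if x t = i then (1:ℝ) else 0) *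
            (((∏ s, k (x s)) * ∏ s : Fin T, Km (x s.castSucc) (x s.succ)) *
              ∏ s, u s.val (x s)) := by
        refine Finset.sum_congr rfl fun x _ => ?_
        by_cases hx : x t = i <;> simp [hx]
    _ = ∑ j, (if j = i then (1:ℝ) else 0) *
          (u t.val j * k j * phivgen n Km k u (fun _ => 1) t.val j *
            phiaux n Km k u T (T - t.val) j) := h
    _ = u t.val i * k i * phihat n Km k u t.val i *
          phiaux n Km k u T (T - t.val) i := by
        simp only [boole_mul, Finset.sum_ite_eq', Finset.mem_univ, if_true]
        rw [phivgen_one]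
end

section
/- With K, U as in the path-graph structure (K_{i_1…i_T} = ∏_t k_{i_t} ∏_t K_{i_t i_{t+1}}, U = u₁⊗⋯⊗u_T, all entries nonnegative), the bi-marginal projection onto consecutive marginals satisfies P_{t,t+1}(K ⊙ U) = diag(u_t ⊙ k ⊙ φ̂_t) K diag(u_{t+1} ⊙ k ⊙ φ_{t+1}), where φ̂_t and φ_t are the forward and backward message vectors defined recursively by φ̂₁ = 𝟏, φ̂_s = Kᵀ(u_{s-1} ⊙ k ⊙ φ̂_{s-1}), and φ_T = 𝟏, φ_s = K(u_{s+1} ⊙ k ⊙ φ_{s+1}). -/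
/-- Forward message with combined weights `c`. -/
def fhat (n : ℕ) (Km : Matrix (Fin n) (Fin n) ℝ) (c : ℕ → Fin n → ℝ) : ℕ → Fin n → ℝ
  | 0 => fun _ => 1
  | s + 1 => fun i => ∑ j, Km j i * (c s j * fhat n Km c s j)

/-- Generalized backward message with weights `w` and base vector `v`. -/
def bmsg (n : ℕ) (Km : Matrix (Fin n) (Fin n) ℝ) (w : ℕ → Fin n → ℝ)
    (v : Fin n → ℝ) : ℕ → Fin n → ℝ
  | 0 => v
  | m + 1 => fun i => ∑ j, Km i j * (w m j * bmsg n Km w v m j)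

lemma phihat_eq_fhat (n : ℕ) (Km : Matrix (Fin n) (Fin n) ℝ) (k : Fin n → ℝ)
    (u : ℕ → Fin n → ℝ) : ∀ s, phihat n Km k u s = fhat n Km (fun s j => u s j * k j) s
  | 0 => rfl
  | s + 1 => by
    funext i
    simp only [phihat, fhat, phihat_eq_fhat n Km k u s]

lemma phiaux_eq_bmsg (n : ℕ) (Km : Matrix (Fin n) (Fin n) ℝ) (k : Fin n → ℝ)
    (u : ℕ → Fin n → ℝ) (T : ℕ) :
    ∀ m, phiaux n Km k u T m = bmsg n Km (fun m' j => u (T - m') j * k j) (fun _ => 1) m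
  | 0 => rfl
  | m + 1 => by
    funext i
    simp only [phiaux, bmsg, phiaux_eq_bmsg n Km k u T m]

lemma bmsg_shift (n : ℕ) (Km : Matrix (Fin n) (Fin n) ℝ) (w : ℕ → Fin n → ℝ)
    (v : Fin n → ℝ) :
    ∀ m, bmsg n Km w v (m + 1)
      = bmsg n Km (fun m' => w (m' + 1)) (fun i => ∑ j, Km i j * (w 0 j * v j)) m
  | 0 => rfl
  | m + 1 => by
    funext i
    have h1 : bmsg n Km w v (m + 1 + 1) i
        = ∑ j, Km i j * (w (m + 1) j * bmsg n Km w v (m + 1) j) := rfl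
    rw [h1, bmsg_shift n Km w v m]
    rfl

def snocEquiv (α : Type*) (m : ℕ) : ((Fin m → α) × α) ≃ (Fin (m + 1) → α) where
  toFun p := Fin.snoc p.1 p.2
  invFun x := (fun i => x i.castSucc, x (Fin.last m))
  left_inv p := by simp
  right_inv x := by
    funext i
    refine Fin.lastCases ?_ ?_ i <;> simp

lemma sum_snoc {α : Type*} [Fintype α] {m : ℕ} (f : (Fin (m + 1) → α) → ℝ) :
    ∑ x : Fin (m + 1) → α, f x = ∑ y : Fin m → α, ∑ z : α, f (Fin.snoc y z) := by
  rw [← Equiv.sum_comp (snocEquiv α m) f, Fintype.sum_prod_type]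
  rfl

lemma prod_c_snoc (n : ℕ) (c : ℕ → Fin n → ℝ) (m : ℕ) (y : Fin (m + 1) → Fin n)
    (z : Fin n) :
    (∏ s : Fin (m + 1 + 1), c s.val ((Fin.snoc y z : Fin (m + 1 + 1) → Fin n) s))
      = (∏ s : Fin (m + 1), c s.val (y s)) * c (m + 1) z := by
  rw [Fin.prod_univ_castSucc
    (fun s : Fin (m + 1 + 1) => c s.val ((Fin.snoc y z : Fin (m + 1 + 1) → Fin n) s))]
  simp

lemma prod_Km_snoc (n : ℕ) (Km : Matrix (Fin n) (Fin n) ℝ) (m : ℕ)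
    (y : Fin (m + 1) → Fin n) (z : Fin n) :
    (∏ s : Fin (m + 1), Km ((Fin.snoc y z : Fin (m + 1 + 1) → Fin n) s.castSucc)
        ((Fin.snoc y z : Fin (m + 1 + 1) → Fin n) s.succ))
      = (∏ s : Fin m, Km (y s.castSucc) (y s.succ)) * Km (y (Fin.last m)) z := by
  rw [Fin.prod_univ_castSucc
    (fun s : Fin (m + 1) => Km ((Fin.snoc y z : Fin (m + 1 + 1) → Fin n) s.castSucc)
      ((Fin.snoc y z : Fin (m + 1 + 1) → Fin n) s.succ))]
  simp [Fin.succ_castSucc, Fin.succ_last, -Fin.castSucc_succ]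

lemma fwd (n : ℕ) (Km : Matrix (Fin n) (Fin n) ℝ) (c : ℕ → Fin n → ℝ) :
    ∀ (T : ℕ) (i : Fin n),
    (∑ x : Fin (T + 1) → Fin n, if x (Fin.last T) = i then
        (∏ s, c s.val (x s)) * ∏ s : Fin T, Km (x s.castSucc) (x s.succ) else 0)
    = c T i * fhat n Km c T i := by
  intro T
  induction T with
  | zero =>
    intro i
    rw [← Equiv.sum_comp (Equiv.funUnique (Fin 1) (Fin n)).symm]
    simp [fhat, Finset.sum_ite_eq, Equiv.funUnique]
  | succ T ih =>
    intro i
    rw [sum_snoc]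
    have step : ∀ y : Fin (T + 1) → Fin n,
        (∑ z : Fin n,
          if (Fin.snoc y z : Fin (T + 1 + 1) → Fin n) (Fin.last (T + 1)) = i then
            (∏ s, c s.val ((Fin.snoc y z : Fin (T + 1 + 1) → Fin n) s)) *
              ∏ s : Fin (T + 1), Km ((Fin.snoc y z : Fin (T + 1 + 1) → Fin n) s.castSucc)
                ((Fin.snoc y z : Fin (T + 1 + 1) → Fin n) s.succ) else 0)
        = ∑ z0 : Fin n, (if y (Fin.last T) = z0 then
            (∏ s, c s.val (y s)) * ∏ s : Fin T, Km (y s.castSucc) (y s.succ) else 0)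
            * (c (T + 1) i * Km z0 i) := by
      intro y
      simp only [prod_c_snoc, prod_Km_snoc, Fin.snoc_last]
      rw [Finset.sum_ite_eq' Finset.univ i]
      simp only [Finset.mem_univ, if_true]
      have eq2 : ∀ z0 : Fin n, (if y (Fin.last T) = z0 then
            (∏ s, c s.val (y s)) * ∏ s : Fin T, Km (y s.castSucc) (y s.succ) else 0)
            * (c (T + 1) i * Km z0 i)
          = if y (Fin.last T) = z0 then
              ((∏ s, c s.val (y s)) * ∏ s : Fin T, Km (y s.castSucc) (y s.succ))
                * (c (T + 1) i * Km z0 i) else 0 := by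
        intro z0; split_ifs <;> simp
      rw [Finset.sum_congr rfl fun z0 _ => eq2 z0,
        Finset.sum_ite_eq Finset.univ (y (Fin.last T))]
      simp only [Finset.mem_univ, if_true]
      ring
    rw [Finset.sum_congr rfl fun y _ => step y, Finset.sum_comm]
    have inner : ∀ z0 : Fin n,
        (∑ y : Fin (T + 1) → Fin n, (if y (Fin.last T) = z0 then
            (∏ s, c s.val (y s)) * ∏ s : Fin T, Km (y s.castSucc) (y s.succ) else 0)
            * (c (T + 1) i * Km z0 i))
        = (c T z0 * fhat n Km c T z0) * (c (T + 1) i * Km z0 i) := by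
      intro z0
      rw [← Finset.sum_mul, ih z0]
    rw [Finset.sum_congr rfl fun z0 _ => inner z0]
    show _ = c (T + 1) i * fhat n Km c (T + 1) i
    simp only [fhat]
    rw [Finset.mul_sum]
    exact Finset.sum_congr rfl fun z0 _ => by ring

lemma key (n : ℕ) (Km : Matrix (Fin n) (Fin n) ℝ) (c : ℕ → Fin n → ℝ) :
    ∀ (T : ℕ) (t : Fin T) (v : Fin n → ℝ) (i j : Fin n),
    (∑ x : Fin (T + 1) → Fin n,
        if x t.castSucc = i ∧ x t.succ = j then
          ((∏ s, c s.val (x s)) * ∏ s : Fin T, Km (x s.castSucc) (x s.succ))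
            * v (x (Fin.last T))
        else 0)
    = (c t.val i * fhat n Km c t.val i) * Km i j *
        (c t.succ.val j * bmsg n Km (fun m => c (T - m)) v (T - t.succ.val) j) := by
  intro T
  induction T with
  | zero => exact fun t => t.elim0
  | succ T ih =>
    intro t v i j
    rw [sum_snoc]
    by_cases ht : t.val = T
    · -- t is the last index
      have hts : t.succ = Fin.last (T + 1) := by
        apply Fin.ext; simp [ht]
      have htc : t.castSucc = Fin.castSucc (Fin.last T) := by
        apply Fin.ext; simp [ht]
      have step : ∀ y : Fin (T + 1) → Fin n,
          (∑ z : Fin n, if (Fin.snoc y z : Fin (T + 1 + 1) → Fin n) t.castSucc = i ∧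
                (Fin.snoc y z : Fin (T + 1 + 1) → Fin n) t.succ = j then
            ((∏ s, c s.val ((Fin.snoc y z : Fin (T + 1 + 1) → Fin n) s)) *
              ∏ s : Fin (T + 1), Km ((Fin.snoc y z : Fin (T + 1 + 1) → Fin n) s.castSucc)
                ((Fin.snoc y z : Fin (T + 1 + 1) → Fin n) s.succ))
              * v ((Fin.snoc y z : Fin (T + 1 + 1) → Fin n) (Fin.last (T + 1))) else 0)
          = (if y (Fin.last T) = i then
              (∏ s, c s.val (y s)) * ∏ s : Fin T, Km (y s.castSucc) (y s.succ) else 0)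
              * (c (T + 1) j * Km i j * v j) := by
        intro y
        simp only [prod_c_snoc, prod_Km_snoc]
        rw [htc, hts]
        simp only [Fin.snoc_castSucc, Fin.snoc_last, ite_and]
        rw [Finset.sum_ite_irrel, Finset.sum_ite_eq' Finset.univ j, Finset.sum_const,
          Finset.card_univ, smul_zero]
        simp only [Finset.mem_univ, if_true]
        split_ifs with hy
        · rw [hy]
          ring
        · simp
      rw [Finset.sum_congr rfl fun y _ => step y, ← Finset.sum_mul, fwd n Km c T i]
      have h0 : T + 1 - t.succ.val = 0 := by simp [Fin.val_succ, ht]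
      rw [h0]
      simp only [bmsg, Fin.val_succ, ht, Fin.coe_castSucc]
      ring
    · -- t is not the last index
      have htlt : t.val < T := by omega
      set t' : Fin T := ⟨t.val, htlt⟩ with ht'
      have hvt' : (t' : ℕ) = t.val := rfl
      have htc : t.castSucc = Fin.castSucc (Fin.castSucc t') := by apply Fin.ext; simp [hvt']
      have hts : t.succ = Fin.castSucc (t'.succ) := by apply Fin.ext; simp [hvt']
      have step : ∀ y : Fin (T + 1) → Fin n,
          (∑ z : Fin n, if (Fin.snoc y z : Fin (T + 1 + 1) → Fin n) t.castSucc = i ∧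
                (Fin.snoc y z : Fin (T + 1 + 1) → Fin n) t.succ = j then
            ((∏ s, c s.val ((Fin.snoc y z : Fin (T + 1 + 1) → Fin n) s)) *
              ∏ s : Fin (T + 1), Km ((Fin.snoc y z : Fin (T + 1 + 1) → Fin n) s.castSucc)
                ((Fin.snoc y z : Fin (T + 1 + 1) → Fin n) s.succ))
              * v ((Fin.snoc y z : Fin (T + 1 + 1) → Fin n) (Fin.last (T + 1))) else 0)
          = (if y t'.castSucc = i ∧ y t'.succ = j then
              ((∏ s, c s.val (y s)) * ∏ s : Fin T, Km (y s.castSucc) (y s.succ))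
                * (∑ z : Fin n, Km (y (Fin.last T)) z * (c (T + 1) z * v z)) else 0) := by
        intro y
        simp only [prod_c_snoc, prod_Km_snoc]
        rw [htc, hts]
        simp only [Fin.snoc_castSucc, Fin.snoc_last]
        split_ifs with hy
        · rw [Finset.mul_sum]
          exact Finset.sum_congr rfl fun z _ => by ring
        · simp
      rw [Finset.sum_congr rfl fun y _ => step y,
        ih t' (fun w0 => ∑ z : Fin n, Km w0 z * (c (T + 1) z * v z)) i j]
      have harith : T + 1 - t.succ.val = (T - t'.succ.val) + 1 := by
        simp only [Fin.val_succ, hvt']; omega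
      rw [harith, bmsg_shift]
      simp only [Nat.add_sub_add_right, Nat.sub_zero, Fin.val_succ, hvt']

/-- Bi-marginal projection onto consecutive marginals of the path-graph
structured tensor: `P_{t,t+1}(K ⊙ U) = diag(u_t ⊙ k ⊙ φ̂_t) K diag(u_{t+1} ⊙ k ⊙ φ_{t+1})`. -/
theorem stmt_5 (T n : ℕ) (Km : Matrix (Fin n) (Fin n) ℝ) (k : Fin n → ℝ)
    (u : ℕ → Fin n → ℝ) (hK : ∀ i j, 0 ≤ Km i j) (hk : ∀ i, 0 ≤ k i)
    (hu : ∀ s i, 0 ≤ u s i) (t : Fin T) (i j : Fin n) :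
    (∑ x : Fin (T + 1) → Fin n,
        if x t.castSucc = i ∧ x t.succ = j then
          (((∏ s, k (x s)) * ∏ s : Fin T, Km (x s.castSucc) (x s.succ)) *
            ∏ s, u s.val (x s))
        else 0)
      = (u t.castSucc.val i * k i * phihat n Km k u t.castSucc.val i) *
          Km i j *
          (u t.succ.val j * k j * phiaux n Km k u T (T - t.succ.val) j) := by
  classical
  set c : ℕ → Fin n → ℝ := fun s x2 => u s x2 * k x2 with hc
  have hsum : (∑ x : Fin (T + 1) → Fin n,
        if x t.castSucc = i ∧ x t.succ = j then
          (((∏ s, k (x s)) * ∏ s : Fin T, Km (x s.castSucc) (x s.succ)) *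
            ∏ s, u s.val (x s))
        else 0)
      = (∑ x : Fin (T + 1) → Fin n,
        if x t.castSucc = i ∧ x t.succ = j then
          ((∏ s, c s.val (x s)) * ∏ s : Fin T, Km (x s.castSucc) (x s.succ))
            * (fun _ : Fin n => (1 : ℝ)) (x (Fin.last T))
        else 0) := by
    refine Finset.sum_congr rfl fun x _ => ?_
    split_ifs
    · simp only [hc, Finset.prod_mul_distrib]
      ring
    · rfl
  rw [hsum, key n Km c T t (fun _ => 1) i j, phihat_eq_fhat, phiaux_eq_bmsg]
  have hb : (fun m' j2 => u (T - m') j2 * k j2) = fun m => c (T - m) := rfl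
  rw [hb]
  simp only [hc, Fin.coe_castSucc, mul_one]
end
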